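/- For the quadratic functional J_A(V_p, W_p) = ½‖U − V_p W_pᵀ‖_A² with U the solution of 𝒜(U) = B, the gradient of J_A with respect to V_p equals (𝒜(V_p W_pᵀ) − B) W_p, and the gradient with respect to W_p equals (𝒜(V_p W_pᵀ) − B)ᵀ V_p. -/

import Mathlib

open Matrix Kronecker

/-- The trace pairing `⟨X, Y⟩ = tr(Xᵀ Y)`. -/
def traceIP {a b : ℕ} (X Y : Matrix (Fin a) (Fin b) ℝ) : ℝ :=
  Matrix.trace (Xᵀ * Y)

/-- The linear operator `𝒜(X) = Σ_{i=0}^m K_i X G_iᵀ`. -/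
def opA {n1 n2 m : ℕ} (K : Fin (m + 1) → Matrix (Fin n1) (Fin n1) ℝ)
    (G : Fin (m + 1) → Matrix (Fin n2) (Fin n2) ℝ)
    (X : Matrix (Fin n1) (Fin n2) ℝ) : Matrix (Fin n1) (Fin n2) ℝ :=
  ∑ i, K i * X * (G i)ᵀ

/-- The objective `J_A(V, W) = ½ ‖U − V Wᵀ‖_A²`. -/
noncomputable def JA {n1 n2 m p : ℕ} (K : Fin (m + 1) → Matrix (Fin n1) (Fin n1) ℝ)
    (G : Fin (m + 1) → Matrix (Fin n2) (Fin n2) ℝ)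
    (U : Matrix (Fin n1) (Fin n2) ℝ)
    (V : Matrix (Fin n1) (Fin p) ℝ) (W : Matrix (Fin n2) (Fin p) ℝ) : ℝ :=
  (1 / 2) * traceIP (opA K G (U - V * Wᵀ)) (U - V * Wᵀ)

/-! Along a line `t ↦ E + t • D` the objective is a quadratic polynomial in `t`, since `𝒜` is
linear. Self-adjointness of `𝒜` (from the symmetry of the `K i` and `G i`) makes the two cross
terms equal, so the slope at `0` is `⟨𝒜 E, D⟩`. With `E = U - V Wᵀ`, `𝒜 E = B - 𝒜(V Wᵀ)`, and
moving the factor `W` (resp. `V`) of the direction `D` across the trace pairing gives the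
gradients. -/

section TraceInnerProduct

variable {a b c : ℕ}

lemma traceIP_comm (X Y : Matrix (Fin a) (Fin b) ℝ) : traceIP X Y = traceIP Y X := by
  rw [traceIP, traceIP, ← trace_transpose, transpose_mul, transpose_transpose]

lemma traceIP_add_left (X Y Z : Matrix (Fin a) (Fin b) ℝ) :
    traceIP (X + Y) Z = traceIP X Z + traceIP Y Z := by
  simp [traceIP, Matrix.add_mul]

lemma traceIP_add_right (X Y Z : Matrix (Fin a) (Fin b) ℝ) :
    traceIP X (Y + Z) = traceIP X Y + traceIP X Z := by
  simp [traceIP, Matrix.mul_add]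

lemma traceIP_smul_left (t : ℝ) (X Y : Matrix (Fin a) (Fin b) ℝ) :
    traceIP (t • X) Y = t * traceIP X Y := by
  simp [traceIP]

lemma traceIP_smul_right (t : ℝ) (X Y : Matrix (Fin a) (Fin b) ℝ) :
    traceIP X (t • Y) = t * traceIP X Y := by
  simp [traceIP]

lemma traceIP_neg_neg (X Y : Matrix (Fin a) (Fin b) ℝ) : traceIP (-X) (-Y) = traceIP X Y := by
  simp [traceIP]

lemma traceIP_transpose_transpose (X Y : Matrix (Fin a) (Fin b) ℝ) :
    traceIP Xᵀ Yᵀ = traceIP X Y := by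
  rw [traceIP, traceIP, transpose_transpose, trace_mul_comm, ← trace_transpose, transpose_mul,
    transpose_transpose]

lemma traceIP_mul_left (A : Matrix (Fin c) (Fin a) ℝ) (X : Matrix (Fin a) (Fin b) ℝ)
    (Y : Matrix (Fin c) (Fin b) ℝ) : traceIP (A * X) Y = traceIP X (Aᵀ * Y) := by
  rw [traceIP, traceIP, transpose_mul, Matrix.mul_assoc]

lemma traceIP_mul_right (X : Matrix (Fin a) (Fin b) ℝ) (B : Matrix (Fin b) (Fin c) ℝ)
    (Y : Matrix (Fin a) (Fin c) ℝ) : traceIP (X * B) Y = traceIP X (Y * Bᵀ) := by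
  rw [traceIP, traceIP, transpose_mul, Matrix.mul_assoc, trace_mul_comm, Matrix.mul_assoc]

lemma traceIP_mul_transpose_right (S : Matrix (Fin a) (Fin b) ℝ) (H : Matrix (Fin a) (Fin c) ℝ)
    (W : Matrix (Fin b) (Fin c) ℝ) : traceIP S (H * Wᵀ) = traceIP (S * W) H := by
  rw [traceIP_comm, traceIP_mul_right, transpose_transpose, traceIP_comm]

lemma traceIP_mul_transpose_left (S : Matrix (Fin a) (Fin b) ℝ) (V : Matrix (Fin a) (Fin c) ℝ)
    (H : Matrix (Fin b) (Fin c) ℝ) : traceIP S (V * Hᵀ) = traceIP (Sᵀ * V) H := by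
  rw [← traceIP_transpose_transpose, transpose_mul, transpose_transpose,
    traceIP_mul_transpose_right]

end TraceInnerProduct

lemma hasDerivAt_quadratic_zero (a b c : ℝ) :
    HasDerivAt (fun t : ℝ => a + t * b + t ^ 2 * c) b 0 := by
  simpa [Pi.add_def] using (((hasDerivAt_id (0 : ℝ)).mul_const b).const_add a).add
    ((hasDerivAt_pow 2 (0 : ℝ)).mul_const c)

section Operator

variable {n1 n2 m : ℕ} {K : Fin (m + 1) → Matrix (Fin n1) (Fin n1) ℝ}
  {G : Fin (m + 1) → Matrix (Fin n2) (Fin n2) ℝ}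

lemma opA_add (X Y : Matrix (Fin n1) (Fin n2) ℝ) : opA K G (X + Y) = opA K G X + opA K G Y := by
  simp [opA, Matrix.add_mul, Matrix.mul_add, Finset.sum_add_distrib]

lemma opA_sub (X Y : Matrix (Fin n1) (Fin n2) ℝ) : opA K G (X - Y) = opA K G X - opA K G Y := by
  simp [opA, Matrix.sub_mul, Matrix.mul_sub, Finset.sum_sub_distrib]

lemma opA_smul (t : ℝ) (X : Matrix (Fin n1) (Fin n2) ℝ) : opA K G (t • X) = t • opA K G X := by
  simp [opA, Finset.smul_sum]

lemma traceIP_opA_comm (hK : ∀ i, (K i)ᵀ = K i) (hG : ∀ i, (G i)ᵀ = G i)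
    (X Y : Matrix (Fin n1) (Fin n2) ℝ) : traceIP (opA K G X) Y = traceIP (opA K G Y) X := by
  simp only [opA, traceIP, transpose_sum, Matrix.sum_mul, trace_sum]
  refine Finset.sum_congr rfl fun i _ => ?_
  change traceIP (K i * X * (G i)ᵀ) Y = traceIP (K i * Y * (G i)ᵀ) X
  rw [traceIP_mul_right, traceIP_mul_left, transpose_transpose, hK, hG, traceIP_comm,
    Matrix.mul_assoc]

lemma traceIP_opA_add_smul (hK : ∀ i, (K i)ᵀ = K i) (hG : ∀ i, (G i)ᵀ = G i)
    (E D : Matrix (Fin n1) (Fin n2) ℝ) (t : ℝ) :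
    traceIP (opA K G (E + t • D)) (E + t • D) =
      traceIP (opA K G E) E + 2 * t * traceIP (opA K G E) D + t ^ 2 * traceIP (opA K G D) D := by
  rw [opA_add, opA_smul, traceIP_add_left, traceIP_add_right, traceIP_add_right,
    traceIP_smul_left, traceIP_smul_right, traceIP_smul_right, traceIP_smul_left,
    traceIP_opA_comm hK hG D E]
  ring

lemma hasDerivAt_half_traceIP_opA_line (hK : ∀ i, (K i)ᵀ = K i) (hG : ∀ i, (G i)ᵀ = G i)
    (E D : Matrix (Fin n1) (Fin n2) ℝ) :
    HasDerivAt (fun t : ℝ => (1 / 2) * traceIP (opA K G (E + t • D)) (E + t • D))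
      (traceIP (opA K G E) D) 0 := by
  have hquad : (fun t : ℝ => (1 / 2) * traceIP (opA K G (E + t • D)) (E + t • D)) = fun t =>
      (1 / 2) * traceIP (opA K G E) E + t * traceIP (opA K G E) D
        + t ^ 2 * ((1 / 2) * traceIP (opA K G D) D) := by
    funext t
    rw [traceIP_opA_add_smul hK hG]
    ring
  rw [hquad]
  exact hasDerivAt_quadratic_zero _ _ _

end Operator

theorem JA_gradients_general {n1 n2 m p : ℕ}
    (K : Fin (m + 1) → Matrix (Fin n1) (Fin n1) ℝ)
    (G : Fin (m + 1) → Matrix (Fin n2) (Fin n2) ℝ)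
    (hK : ∀ i, (K i)ᵀ = K i) (hG : ∀ i, (G i)ᵀ = G i)
    (U B : Matrix (Fin n1) (Fin n2) ℝ) (hU : opA K G U = B)
    (V : Matrix (Fin n1) (Fin p) ℝ) (W : Matrix (Fin n2) (Fin p) ℝ) :
    (∀ H : Matrix (Fin n1) (Fin p) ℝ,
      HasDerivAt (fun t : ℝ => JA K G U (V + t • H) W)
        (traceIP ((opA K G (V * Wᵀ) - B) * W) H) 0) ∧
    (∀ H : Matrix (Fin n2) (Fin p) ℝ,
      HasDerivAt (fun t : ℝ => JA K G U V (W + t • H))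
        (traceIP ((opA K G (V * Wᵀ) - B)ᵀ * V) H) 0) := by
  have hres : opA K G (U - V * Wᵀ) = -(opA K G (V * Wᵀ) - B) := by
    rw [opA_sub, hU, neg_sub]
  constructor
  · intro H
    have hline : ∀ t : ℝ, U - (V + t • H) * Wᵀ = U - V * Wᵀ + t • -(H * Wᵀ) := fun t => by
      rw [Matrix.add_mul, Matrix.smul_mul, smul_neg]; abel
    have h := hasDerivAt_half_traceIP_opA_line hK hG (U - V * Wᵀ) (-(H * Wᵀ))
    rw [hres, traceIP_neg_neg, traceIP_mul_transpose_right] at h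
    simpa only [JA, hline] using h
  · intro H
    have hline : ∀ t : ℝ, U - V * (W + t • H)ᵀ = U - V * Wᵀ + t • -(V * Hᵀ) := fun t => by
      rw [transpose_add, transpose_smul, Matrix.mul_add, Matrix.mul_smul, smul_neg]; abel
    have h := hasDerivAt_half_traceIP_opA_line hK hG (U - V * Wᵀ) (-(V * Hᵀ))
    rw [hres, traceIP_neg_neg, traceIP_mul_transpose_left] at h
    simpa only [JA, hline] using h

/-- The gradient of `J_A` with respect to `V_p` is `(𝒜(V_p W_pᵀ) − B) W_p` and
with respect to `W_p` is `(𝒜(V_p W_pᵀ) − B)ᵀ V_p`, expressed via directional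
derivatives against the trace inner product. -/
theorem JA_gradients {n1 n2 m p : ℕ}
    (K : Fin (m + 1) → Matrix (Fin n1) (Fin n1) ℝ)
    (G : Fin (m + 1) → Matrix (Fin n2) (Fin n2) ℝ)
    (hK : ∀ i, (K i)ᵀ = K i) (hG : ∀ i, (G i)ᵀ = G i)
    (hA : (∑ i, (G i) ⊗ₖ (K i)).PosDef)
    (U B : Matrix (Fin n1) (Fin n2) ℝ) (hU : opA K G U = B)
    (V : Matrix (Fin n1) (Fin p) ℝ) (W : Matrix (Fin n2) (Fin p) ℝ) :
    (∀ H : Matrix (Fin n1) (Fin p) ℝ,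
      HasDerivAt (fun t : ℝ => JA K G U (V + t • H) W)
        (traceIP ((opA K G (V * Wᵀ) - B) * W) H) 0) ∧
    (∀ H : Matrix (Fin n2) (Fin p) ℝ,
      HasDerivAt (fun t : ℝ => JA K G U V (W + t • H))
        (traceIP ((opA K G (V * Wᵀ) - B)ᵀ * V) H) 0) :=
  JA_gradients_general K G hK hG U B hU V W
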